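/- arXiv:2006.01565 — 2 statements merged into one kernel-verified Lean document; each statement's English description precedes it below -/
import Mathlib

section
/- Let 0 < r₀ < r₁, m = log(r₁/r₀) > log 3, and a ∈ ℝⁿ with |a| ≥ r₁. Set R₀ = r₀/(|a|(|a| − r₀)) and R₁ = r₁/(|a|(|a| + r₁)). Then R₁/R₀ ≥ (e^m − 1)/2 > 1, and hence log(R₁/R₀) ≥ m − log 3. -/
/-!
Write `t = ‖a‖`. The ratio `R₁ / R₀` simplifies to `r₁ (t - r₀) / (r₀ (t + r₁))`, and comparing it
with `(r₁ / r₀ - 1) / 2` leaves the difference `r₀ (r₁ + r₀) (t - r₁) ≥ 0`, which is where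
`r₁ ≤ ‖a‖` enters. Since `e^m = r₁ / r₀ > 3`, the bound `(e^m - 1) / 2` exceeds both `1` and
`e^m / 3`, and taking logarithms of the latter gives `m - log 3`.
-/

open Real

section InversionRadii

variable {r₀ r₁ t : ℝ}

lemma inversion_radius_ratio_eq (ht : t ≠ 0) :
    (r₁ / (t * (t + r₁))) / (r₀ / (t * (t - r₀))) = r₁ * (t - r₀) / (r₀ * (t + r₁)) := by
  simp only [div_eq_mul_inv, mul_inv]
  field_simp

lemma half_sub_one_le_inversion_radius_ratio (h0 : 0 < r₀) (h01 : r₀ < r₁) (ht : r₁ ≤ t) :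
    (r₁ / r₀ - 1) / 2 ≤ (r₁ / (t * (t + r₁))) / (r₀ / (t * (t - r₀))) := by
  have key : r₁ * (t - r₀) * (2 * r₀) - (r₁ - r₀) * (r₀ * (t + r₁))
      = r₀ * (r₁ + r₀) * (t - r₁) := by ring
  have hkey : 0 ≤ r₀ * (r₁ + r₀) * (t - r₁) := by
    have : 0 ≤ t - r₁ := sub_nonneg.2 ht
    have : 0 < r₁ + r₀ := by linarith
    positivity
  rw [inversion_radius_ratio_eq (by linarith), div_sub_one h0.ne', div_div,
    div_le_div_iff₀ (by positivity) (by nlinarith)]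
  linarith

end InversionRadii

lemma sub_log_three_le_log_of_half_sub_one_le {m y : ℝ} (hm : 3 ≤ exp m)
    (hy : (exp m - 1) / 2 ≤ y) : m - log 3 ≤ log y := by
  calc m - log 3 = log (exp m / 3) := by rw [log_div (exp_ne_zero m) three_ne_zero, log_exp]
    _ ≤ log y := log_le_log (by positivity) (by linarith)

theorem stmt_5 (n : ℕ) (a : EuclideanSpace ℝ (Fin n)) (r₀ r₁ m : ℝ)
    (h0 : 0 < r₀) (h01 : r₀ < r₁) (ha : r₁ ≤ ‖a‖)
    (hm : m = Real.log (r₁ / r₀)) (hm3 : Real.log 3 < m) :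
    (Real.exp m - 1) / 2 ≤
        (r₁ / (‖a‖ * (‖a‖ + r₁))) / (r₀ / (‖a‖ * (‖a‖ - r₀))) ∧
    1 < (Real.exp m - 1) / 2 ∧
    m - Real.log 3 ≤
      Real.log ((r₁ / (‖a‖ * (‖a‖ + r₁))) / (r₀ / (‖a‖ * (‖a‖ - r₀)))) := by
  have hexp : exp m = r₁ / r₀ := by rw [hm, exp_log (div_pos (h0.trans h01) h0)]
  have h3 : 3 < exp m := (log_lt_iff_lt_exp (by norm_num)).1 hm3
  have hR := half_sub_one_le_inversion_radius_ratio h0 h01 ha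
  rw [← hexp] at hR
  exact ⟨hR, by linarith, sub_log_three_le_log_of_half_sub_one_le h3.le hR⟩
end

section
/- Let ξ ∈ ℝⁿ with |ξ| = 1, and let R be a linear isometry of ℝⁿ with R(ξ) = eₙ, where eₙ = (0,…,0,1). Define Q(x) = 2(x − eₙ)/|x − eₙ|² + eₙ and P(x) = x − 2(x·eₙ)eₙ, and set M = P ∘ Q ∘ R. Then for every x in the open unit ball of ℝⁿ, |M(x)| = |x + ξ|/|x − ξ|. -/
/-!
`P` is the reflection in the hyperplane `e⊥`, an isometry, and `Q` is the inversion in the sphere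
of radius `√2` about `e`, which sends `-e` to `0`. The distance formula for inversions then gives
`‖Q y‖ = dist (Q y) (Q (-e)) = ‖y + e‖ / ‖y - e‖`, and `R` carries `x ± ξ` to `R x ± e` isometrically.
-/

open EuclideanGeometry

section

variable {E : Type*} [NormedAddCommGroup E] [InnerProductSpace ℝ E] {e : E}

theorem norm_sub_two_inner_smul_of_norm_eq_one (he : ‖e‖ = 1) (z : E) :
    ‖z - (2 * inner ℝ z e) • e‖ = ‖z‖ := by
  refine (pow_left_inj₀ (norm_nonneg _) (norm_nonneg _) two_ne_zero).mp ?_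
  rw [norm_sub_sq_real, real_inner_smul_right, norm_smul, Real.norm_eq_abs, mul_pow, sq_abs, he]
  ring

theorem inversion_sqrt_two_eq (e y : E) :
    inversion e (√2) y = (2 / ‖y - e‖ ^ 2) • (y - e) + e := by
  rw [inversion, dist_eq_norm, div_pow, Real.sq_sqrt zero_le_two, vsub_eq_sub, vadd_eq_add]

theorem norm_neg_sub_self_of_norm_eq_one (he : ‖e‖ = 1) : ‖-e - e‖ = 2 := by
  rw [show -e - e = (-2 : ℝ) • e by module, norm_smul, he]
  norm_num

theorem inversion_sqrt_two_neg_of_norm_eq_one (he : ‖e‖ = 1) : inversion e (√2) (-e) = 0 := by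
  rw [inversion_sqrt_two_eq, norm_neg_sub_self_of_norm_eq_one he,
    show -e - e = (-2 : ℝ) • e by module, smul_smul]
  module

theorem norm_two_div_sq_smul_sub_add_of_norm_eq_one (he : ‖e‖ = 1) {y : E} (hy : y ≠ e) :
    ‖(2 / ‖y - e‖ ^ 2) • (y - e) + e‖ = ‖y + e‖ / ‖y - e‖ := by
  have hne : -e ≠ e := fun h => by
    simpa [h] using norm_neg_sub_self_of_norm_eq_one he
  rw [← inversion_sqrt_two_eq, ← dist_zero_right, ← inversion_sqrt_two_neg_of_norm_eq_one he,
    dist_inversion_inversion hy hne, Real.sq_sqrt zero_le_two, dist_eq_norm, dist_eq_norm,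
    dist_eq_norm, sub_neg_eq_add, norm_neg_sub_self_of_norm_eq_one he]
  field_simp

end

theorem stmt_9_general (n : ℕ)
    (e ξ : EuclideanSpace ℝ (Fin (n + 1)))
    (hξ : ‖ξ‖ = 1)
    (R : EuclideanSpace ℝ (Fin (n + 1)) ≃ₗᵢ[ℝ] EuclideanSpace ℝ (Fin (n + 1)))
    (hR : R ξ = e)
    (Q P : EuclideanSpace ℝ (Fin (n + 1)) → EuclideanSpace ℝ (Fin (n + 1)))
    (hQ : ∀ y, Q y = (2 / ‖y - e‖ ^ 2) • (y - e) + e)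
    (hP : ∀ y, P y = y - (2 * (inner ℝ y e : ℝ)) • e)
    (x : EuclideanSpace ℝ (Fin (n + 1))) (hx : ‖x‖ < 1) :
    ‖P (Q (R x))‖ = ‖x + ξ‖ / ‖x - ξ‖ := by
  have he : ‖e‖ = 1 := by rw [← hR, R.norm_map, hξ]
  have hRx : R x ≠ e := fun h => by
    have := congrArg norm h
    rw [R.norm_map, he] at this
    exact hx.ne this
  rw [hP, norm_sub_two_inner_smul_of_norm_eq_one he, hQ,
    norm_two_div_sq_smul_sub_add_of_norm_eq_one he hRx, ← hR, ← map_add, ← map_sub, R.norm_map,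
    R.norm_map]

theorem stmt_9 (n : ℕ)
    (e ξ : EuclideanSpace ℝ (Fin (n + 1)))
    (he : e = EuclideanSpace.single (Fin.last n) (1:ℝ))
    (hξ : ‖ξ‖ = 1)
    (R : EuclideanSpace ℝ (Fin (n + 1)) ≃ₗᵢ[ℝ] EuclideanSpace ℝ (Fin (n + 1)))
    (hR : R ξ = e)
    (Q P : EuclideanSpace ℝ (Fin (n + 1)) → EuclideanSpace ℝ (Fin (n + 1)))
    (hQ : ∀ y, Q y = (2 / ‖y - e‖ ^ 2) • (y - e) + e)
    (hP : ∀ y, P y = y - (2 * (inner ℝ y e : ℝ)) • e)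
    (x : EuclideanSpace ℝ (Fin (n + 1))) (hx : ‖x‖ < 1) :
    ‖P (Q (R x))‖ = ‖x + ξ‖ / ‖x - ξ‖ :=
  stmt_9_general n e ξ hξ R hR Q P hQ hP x hx
end
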